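/- arXiv:math/0409454 — 4 statements merged into one kernel-verified Lean document; each statement's English description precedes it below -/
import Mathlib

section
/- Let G be a group and let H be an abelian subgroup of G with finite index n = [G : H]. Let m ∈ ℕ and let ρ : G → U(m) be a homomorphism from G into the unitary group of m × m complex matrices such that the range of ρ generates the full matrix algebra M_m(ℂ) as a ℂ-algebra (equivalently, ρ is an irreducible unitary representation of degree m). Then m ≤ n. -/
/-!
The commuting operators `ρ h`, `h ∈ H`, have a common eigenvector `v`. For a coset
representative `r` of `g H` we get `ρ g v = ρ r (ρ (r⁻¹ g) v) ∈ ℂ · ρ r v`, so the span of the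
orbit `ρ(G) v` has dimension at most `[G : H]`. This span is `ρ(G)`-invariant, hence invariant
under the algebra generated by `ρ(G)`, which is all of `M_m(ℂ)`; being nonzero it is everything.
-/

open Module Submodule Set

namespace Module.End

variable {K V : Type*} [Field K] [AddCommGroup V] [Module K V]

theorem exists_common_eigenvector [IsAlgClosed K] [FiniteDimensional K V] [Nontrivial V]
    {ι : Type*} (f : ι → End K V) (hf : ∀ i j, Commute (f i) (f j)) :
    ∃ v ≠ (0 : V), ∀ i, ∃ c : K, f i v = c • v := by
  induction hN : finrank K V using Nat.strong_induction_on generalizing V with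
  | _ N ih =>
    by_cases hscalar : ∀ i, ∃ c : K, f i = c • 1
    · obtain ⟨v, hv⟩ := exists_ne (0 : V)
      refine ⟨v, hv, fun i => ?_⟩
      obtain ⟨c, hc⟩ := hscalar i
      exact ⟨c, by simp [hc]⟩
    push Not at hscalar
    obtain ⟨i₀, hi₀⟩ := hscalar
    obtain ⟨μ, hμ⟩ := exists_eigenvalue (f i₀)
    set E := eigenspace (f i₀) μ
    -- A proper eigenspace of `f i₀` is a smaller space stable under the whole family.
    have hE_ne_top : E ≠ ⊤ := fun htop => hi₀ μ <| LinearMap.ext fun v =>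
      mem_eigenspace_iff.mp (htop ▸ mem_top : v ∈ E)
    have hmaps i : MapsTo (f i) E E := mapsTo_genEigenspace_of_comm (hf i₀ i) μ 1
    have : Nontrivial E := nontrivial_iff_ne_bot.mpr hμ
    obtain ⟨v, hv0, hv⟩ := ih (finrank K E) (hN ▸ finrank_lt hE_ne_top)
      (fun i => (f i).restrict (hmaps i))
      (fun i j => LinearMap.restrict_commute (hf i j) _ _) rfl
    refine ⟨v, by simpa using hv0, fun i => ?_⟩
    obtain ⟨c, hc⟩ := hv i
    exact ⟨c, congrArg Subtype.val hc⟩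

end Module.End

namespace Submodule

variable {K V : Type*} [Field K] [AddCommGroup V] [Module K V]

theorem eq_top_of_forall_mapsTo {p : Submodule K V} (hp : p ≠ ⊥)
    (h : ∀ f : End K V, MapsTo f p p) : p = ⊤ := by
  obtain ⟨w, hw, hw0⟩ := p.ne_bot_iff.mp hp
  obtain ⟨φ, hφ⟩ := Projective.exists_dual_eq_one K hw0
  refine eq_top_iff.mpr fun u _ => ?_
  simpa [hφ] using h (φ.smulRight u) hw

end Submodule

namespace Representation

variable {K G V : Type*} [Field K] [Group G] [AddCommGroup V] [Module K V]
  (ρ : Representation K G V)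

theorem eq_bot_or_eq_top_of_adjoin_range_eq_top (hρ : Algebra.adjoin K (range ρ) = ⊤)
    {p : Submodule K V} (hp : p ∈ ρ.invtSubmodule) : p = ⊥ ∨ p = ⊤ := by
  refine or_iff_not_imp_left.mpr fun hp0 => eq_top_of_forall_mapsTo hp0 fun f => ?_
  have hf : f ∈ Algebra.adjoin K (range ρ) := hρ ▸ Algebra.mem_top
  induction hf using Algebra.adjoin_induction with
  | mem f hf =>
    obtain ⟨g, rfl⟩ := hf
    exact (ρ.mem_invtSubmodule.mp hp) g
  | algebraMap c => exact fun v hv => by simpa using p.smul_mem c hv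
  | add f g _ _ hf hg => exact fun v hv => p.add_mem (hf hv) (hg hv)
  | mul f g _ _ hf hg => exact hf.comp hg

theorem span_orbit_mem_invtSubmodule (v : V) :
    span K (range fun g => ρ g v) ∈ ρ.invtSubmodule := by
  refine ρ.mem_invtSubmodule.mpr fun g => span_le.mpr ?_
  rintro _ ⟨g', rfl⟩
  exact subset_span ⟨g * g', by simp⟩

theorem finrank_span_orbit_le_index (H : Subgroup G) [H.FiniteIndex] {v : V}
    (hv : ∀ h : H, ∃ c : K, ρ h v = c • v) :
    finrank K (span K (range fun g => ρ g v)) ≤ H.index := by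
  have : Fintype (G ⧸ H) := Fintype.ofFinite _
  have := FiniteDimensional.span_of_finite K (finite_range fun q : G ⧸ H => ρ q.out v)
  have hle : span K (range fun g => ρ g v) ≤ span K (range fun q : G ⧸ H => ρ q.out v) := by
    refine span_le.mpr ?_
    rintro _ ⟨g, rfl⟩
    obtain ⟨c, hc⟩ := hv ⟨(g : G ⧸ H).out⁻¹ * g, QuotientGroup.leftRel_apply.mp
      (Quotient.exact' (g : G ⧸ H).out_eq')⟩
    have hg : ρ g v = c • ρ (g : G ⧸ H).out v := by
      rw [← map_smul, ← hc, ← Module.End.mul_apply, ← map_mul, Subgroup.coe_mk,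
        mul_inv_cancel_left]
    change ρ g v ∈ span K _
    rw [hg]
    exact smul_mem _ c (subset_span ⟨_, rfl⟩)
  calc finrank K (span K (range fun g => ρ g v))
      ≤ finrank K (span K (range fun q : G ⧸ H => ρ q.out v)) := finrank_mono hle
    _ ≤ Fintype.card (G ⧸ H) := finrank_range_le_card _
    _ = H.index := by rw [H.index_eq_card, Nat.card_eq_fintype_card]

theorem finrank_le_index_of_adjoin_range_eq_top [IsAlgClosed K] [FiniteDimensional K V]
    (hρ : Algebra.adjoin K (range ρ) = ⊤) (H : Subgroup G) [H.FiniteIndex]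
    (hH : ∀ a b : H, a * b = b * a) : finrank K V ≤ H.index := by
  cases subsingleton_or_nontrivial V
  · simp [finrank_zero_of_subsingleton]
  obtain ⟨v, hv0, hv⟩ := Module.End.exists_common_eigenvector (fun h : H => ρ h)
    fun a b => by simp only [Commute, SemiconjBy, ← map_mul, ← Subgroup.coe_mul, hH a b]
  have hvW : v ∈ span K (range fun g => ρ g v) := subset_span ⟨1, by simp⟩
  have hW : span K (range fun g => ρ g v) = ⊤ :=
    (ρ.eq_bot_or_eq_top_of_adjoin_range_eq_top hρ (ρ.span_orbit_mem_invtSubmodule v)).resolve_left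
      fun h => hv0 ((mem_bot K).mp (h ▸ hvW))
  calc finrank K V = finrank K (span K (range fun g => ρ g v)) := by rw [hW, finrank_top]
    _ ≤ H.index := ρ.finrank_span_orbit_le_index H hv

end Representation

/-- If `H` is an abelian subgroup of finite index `n` of a group `G`, and
`ρ : G → U(m)` is a unitary matrix representation whose range generates all of
`M_m(ℂ)` as a `ℂ`-algebra (i.e. `ρ` is irreducible of degree `m`), then `m ≤ n`. -/
theorem stmt_3 {G : Type*} [Group G] (H : Subgroup G)
    (hab : ∀ a b : H, a * b = b * a) (n : ℕ) (hn : H.index = n) (hn0 : n ≠ 0)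
    (m : ℕ) (ρ : G →* Matrix.unitaryGroup (Fin m) ℂ)
    (hirr : Algebra.adjoin ℂ
        (Set.range fun g => (ρ g : Matrix (Fin m) (Fin m) ℂ)) = ⊤) :
    m ≤ n := by
  have : H.FiniteIndex := ⟨hn ▸ hn0⟩
  let e : Matrix (Fin m) (Fin m) ℂ →ₐ[ℂ] End ℂ (Fin m → ℂ) := Matrix.toLinAlgEquiv'.toAlgHom
  let σ : Representation ℂ G (Fin m → ℂ) := e.toMonoidHom.comp ((unitary _).subtype.comp ρ)
  have hσ : Algebra.adjoin ℂ (range σ) = ⊤ := by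
    rw [show range σ = e '' range fun g => (ρ g : Matrix (Fin m) (Fin m) ℂ) from
      range_comp e _, ← AlgHom.map_adjoin, hirr, Algebra.map_top, AlgHom.range_eq_top]
    exact Matrix.toLinAlgEquiv'.surjective
  simpa [hn] using σ.finrank_le_index_of_adjoin_range_eq_top hσ H hab
end

section
/- Let G be a finite group and let H be an abelian subgroup of G. Then every irreducible finite-dimensional complex representation V of G satisfies dim_ℂ V ≤ [G : H]. -/
/-!
Commuting operators on a nonzero finite-dimensional complex space have a common eigenvector, so
some `v ≠ 0` is an eigenvector of every element of the abelian subgroup `H`. For `g ∈ G`, the vector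
`ρ g v` is then a multiple of `ρ r v`, where `r` is the chosen representative of the coset `g H`;
hence the span of the orbit `G • v` is spanned by `[G : H]` vectors. Being a nonzero
subrepresentation of the simple `V`, it is all of `V`.
-/

open Module Submodule

namespace Module.End

/-- A minimal nonzero subspace invariant under every `f i` lies in an eigenspace of each `f i`:
its intersection with such an eigenspace is nonzero and, by commutativity, again invariant. -/
theorem exists_forall_eq_smul_of_commute {K V ι : Type*} [Field K] [IsAlgClosed K]
    [AddCommGroup V] [Module K V] [FiniteDimensional K V] [Nontrivial V]
    (f : ι → End K V) (hf : ∀ i j, Commute (f i) (f j)) :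
    ∃ v ≠ 0, ∀ i, ∃ c : K, f i v = c • v := by
  set S : Set (Submodule K V) := {p | p ≠ ⊥ ∧ ∀ i, ∀ x ∈ p, f i x ∈ p}
  have hS : (⊤ : Submodule K V) ∈ S := ⟨top_ne_bot, fun _ _ _ => mem_top⟩
  obtain ⟨p, ⟨hp0, hpf⟩, hpmin⟩ := wellFounded_lt.has_min S ⟨⊤, hS⟩
  have hp_le_eigenspace : ∀ i, ∃ c, p ≤ (f i).eigenspace c := by
    intro i
    have : Nontrivial p := Submodule.nontrivial_iff_ne_bot.mpr hp0
    obtain ⟨c, hc⟩ := exists_eigenvalue ((f i).restrict (hpf i))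
    obtain ⟨w, hw⟩ := hc.exists_hasEigenvector
    set E := p ⊓ (f i).eigenspace c
    have hwE : (w : V) ∈ E :=
      ⟨w.2, eigenspace_restrict_le_eigenspace (f i) (hpf i) c ⟨w, hw.1, rfl⟩⟩
    have hE : E ∈ S :=
      ⟨(Submodule.ne_bot_iff E).mpr ⟨w, hwE, by simpa using hw.2⟩,
        fun j x hx => ⟨hpf j x hx.1, mapsTo_genEigenspace_of_comm (hf i j) c 1 hx.2⟩⟩
    have hEp : E = p := (inf_le_left : E ≤ p).eq_or_lt.resolve_right (hpmin E hE)
    exact ⟨c, hEp ▸ inf_le_right⟩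
  obtain ⟨v, hvp, hv0⟩ := exists_mem_ne_zero_of_ne_bot hp0
  refine ⟨v, hv0, fun i => ?_⟩
  obtain ⟨c, hc⟩ := hp_le_eigenspace i
  exact ⟨c, mem_eigenspace_iff.mp (hc hvp)⟩

end Module.End

namespace Representation

open Set

section Monoid

variable {k G V : Type*} [CommSemiring k] [Monoid G] [AddCommMonoid V] [Module k V]
  (ρ : Representation k G V)

def orbitSpan (v : V) : Subrepresentation ρ where
  toSubmodule := span k (range fun g => ρ g v)
  apply_mem_toSubmodule g := by
    suffices span k (range fun g => ρ g v) ≤ (span k (range fun g => ρ g v)).comap (ρ g) from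
      fun x hx => this hx
    refine span_le.mpr (range_subset_iff.mpr fun g' => ?_)
    simpa [← Module.End.mul_apply, ← map_mul] using subset_span (mem_range_self (g * g'))

@[simp]
theorem toSubmodule_orbitSpan (v : V) :
    (ρ.orbitSpan v).toSubmodule = span k (range fun g => ρ g v) :=
  rfl

theorem mem_orbitSpan_self (v : V) : v ∈ (ρ.orbitSpan v).toSubmodule := by
  simpa using subset_span (mem_range_self (f := fun g => ρ g v) 1)

end Monoid

section Group

variable {k G V : Type*} [CommSemiring k] [Group G] [AddCommMonoid V] [Module k V]
  (ρ : Representation k G V)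

theorem span_orbit_eq_span_out {H : Subgroup G} {v : V} (hv : ∀ h ∈ H, ∃ c : k, ρ h v = c • v) :
    span k (range fun g => ρ g v) = span k (range fun q : G ⧸ H => ρ q.out v) := by
  refine le_antisymm (span_le.mpr (range_subset_iff.mpr fun g => ?_))
    (span_mono (range_subset_iff.mpr fun q => mem_range_self q.out))
  set q : G ⧸ H := QuotientGroup.mk g
  obtain ⟨c, hc⟩ := hv _ (QuotientGroup.eq.mp (QuotientGroup.out_eq' q))
  have : ρ g v = c • ρ q.out v := by
    rw [← map_smul, ← hc, ← Module.End.mul_apply, ← map_mul, mul_inv_cancel_left]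
  rw [this]
  exact smul_mem _ _ (subset_span (mem_range_self _))

end Group

theorem finrank_orbitSpan_le_index {k G V : Type*} [CommRing k] [StrongRankCondition k] [Group G]
    [AddCommGroup V] [Module k V] (ρ : Representation k G V) {H : Subgroup G} [H.FiniteIndex]
    {v : V} (hv : ∀ h ∈ H, ∃ c : k, ρ h v = c • v) :
    finrank k (ρ.orbitSpan v).toSubmodule ≤ H.index := by
  have := H.fintypeQuotientOfFiniteIndex
  calc finrank k (ρ.orbitSpan v).toSubmodule
      = finrank k (span k (range fun q : G ⧸ H => ρ q.out v)) := by
        rw [toSubmodule_orbitSpan, span_orbit_eq_span_out ρ hv]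
    _ ≤ Fintype.card (G ⧸ H) := finrank_range_le_card _
    _ = H.index := by rw [H.index_eq_card, Nat.card_eq_fintype_card]

end Representation

namespace FDRep

open CategoryTheory

variable {k G : Type*} [Field k] [Monoid G]

theorem subrepresentation_eq_top_of_ne_bot (V : FDRep k G) [Simple V]
    (σ : Subrepresentation V.ρ) (hσ : σ ≠ ⊥) : σ = ⊤ := by
  let ι : FDRep.of σ.toRepresentation ⟶ V :=
    ⟨ConcreteCategory.ofHom σ.toSubmodule.subtype, fun _ => rfl⟩
  have : Mono ι := ConcreteCategory.mono_of_injective _ Subtype.val_injective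
  have hι : ι ≠ 0 := by
    obtain ⟨x, hxσ, hx0⟩ := σ.toSubmodule.exists_mem_ne_zero_of_ne_bot
      (fun h => hσ (Subrepresentation.toSubmodule_injective h))
    intro h
    exact hx0 (congrArg (fun φ : _ ⟶ V => φ.hom (⟨x, hxσ⟩ : σ.toSubmodule)) h :)
  have : IsIso ι := (Simple.mono_isIso_iff_nonzero ι).mpr hι
  have hsurj := (ConcreteCategory.bijective_of_isIso ι).2
  exact eq_top_iff.mpr fun y _ => by
    obtain ⟨x, rfl⟩ := hsurj y
    exact x.2

end FDRep

open CategoryTheory in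
/-- If `H` is an abelian subgroup of a finite group `G`, then every irreducible
finite-dimensional complex representation `V` of `G` satisfies `dim V ≤ [G : H]`. -/
theorem stmt_4 {G : Type} [Group G] [Finite G] (H : Subgroup G)
    (hab : ∀ a b : H, a * b = b * a)
    (V : FDRep ℂ G) (hV : Simple V) :
    Module.finrank ℂ V ≤ H.index := by
  rcases subsingleton_or_nontrivial V with _ | _
  · simp [Module.finrank_zero_of_subsingleton]
  obtain ⟨v, hv0, hv⟩ := Module.End.exists_forall_eq_smul_of_commute (fun h : H => V.ρ h)
    fun a b => by simp only [Commute, SemiconjBy, ← map_mul, ← Subgroup.coe_mul, hab a b]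
  have hspan : Representation.orbitSpan V.ρ v = ⊤ :=
    FDRep.subrepresentation_eq_top_of_ne_bot V _ fun h => by
      have hv := Representation.mem_orbitSpan_self V.ρ v
      rw [h] at hv
      exact hv0 ((Submodule.mem_bot ℂ).mp hv)
  calc Module.finrank ℂ V = Module.finrank ℂ (Representation.orbitSpan V.ρ v).toSubmodule := by
        rw [hspan]; exact (finrank_top ℂ V).symm
    _ ≤ H.index := Representation.finrank_orbitSpan_le_index V.ρ fun h hh => hv ⟨h, hh⟩
end

section
/- Every abelian subgroup H of the alternating group A₅ (the group of even permutations of a five-element set) has index strictly greater than 5, i.e. [A₅ : H] > 5. -/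
/-! Every element of `A₅` has order `1`, `2`, `3` or `5`, whereas a finite abelian group whose
order has two distinct prime factors `p, q` contains an element of order `p * q` (the product of
elements of orders `p` and `q` given by Cauchy's theorem). Since every divisor of `60` larger
than `5` has two distinct prime factors, abelian subgroups of `A₅` have order at most `5`, hence
index at least `12`. -/

theorem CommGroup.exists_orderOf_eq_mul {G : Type*} [CommGroup G] [Finite G] {p q : ℕ}
    (hp : p.Prime) (hq : q.Prime) (hpq : p ≠ q) (hpG : p ∣ Nat.card G) (hqG : q ∣ Nat.card G) :
    ∃ g : G, orderOf g = p * q := by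
  have := Fact.mk hp
  have := Fact.mk hq
  obtain ⟨x, hx⟩ := exists_prime_orderOf_dvd_card' p hpG
  obtain ⟨y, hy⟩ := exists_prime_orderOf_dvd_card' q hqG
  have hcop : (orderOf x).Coprime (orderOf y) := by
    rw [hx, hy]
    exact (Nat.coprime_primes hp hq).2 hpq
  exact ⟨x * y, by rw [(Commute.all x y).orderOf_mul_eq_mul_orderOf_of_coprime hcop, hx, hy]⟩

theorem Nat.exists_primes_dvd_of_dvd_sixty {n : ℕ} (hn : n ∣ 60) (h5 : 5 < n) :
    ∃ p q : ℕ, p.Prime ∧ q.Prime ∧ p ≠ q ∧ p ∣ n ∧ q ∣ n := by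
  have key : ∀ m ∈ Nat.divisors 60, 5 < m →
      (2 ∣ m ∧ 3 ∣ m) ∨ (2 ∣ m ∧ 5 ∣ m) ∨ (3 ∣ m ∧ 5 ∣ m) := by decide
  rcases key n (Nat.mem_divisors.2 ⟨hn, by norm_num⟩) h5 with ⟨hp, hq⟩ | ⟨hp, hq⟩ | ⟨hp, hq⟩
  exacts [⟨2, 3, by norm_num, by norm_num, by norm_num, hp, hq⟩,
    ⟨2, 5, by norm_num, by norm_num, by norm_num, hp, hq⟩,
    ⟨3, 5, by norm_num, by norm_num, by norm_num, hp, hq⟩]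

namespace alternatingGroup

theorem nat_card_fin_five : Nat.card (alternatingGroup (Fin 5)) = 60 := by
  rw [nat_card_alternatingGroup, Nat.card_fin]
  rfl

set_option maxRecDepth 10000 in
theorem pow_eq_one_fin_five (g : alternatingGroup (Fin 5)) :
    g ^ 2 = 1 ∨ g ^ 3 = 1 ∨ g ^ 5 = 1 := by
  revert g
  decide

theorem orderOf_eq_one_or_prime_fin_five (g : alternatingGroup (Fin 5)) :
    orderOf g = 1 ∨ (orderOf g).Prime := by
  have of_dvd_prime {p : ℕ} (hp : p.Prime) (h : g ^ p = 1) : orderOf g = 1 ∨ (orderOf g).Prime :=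
    ((Nat.dvd_prime hp).1 (orderOf_dvd_of_pow_eq_one h)).imp_right fun h : orderOf g = p => h ▸ hp
  rcases pow_eq_one_fin_five g with h | h | h
  exacts [of_dvd_prime Nat.prime_two h, of_dvd_prime Nat.prime_three h,
    of_dvd_prime Nat.prime_five h]

theorem card_le_five_of_commute (H : Subgroup (alternatingGroup (Fin 5)))
    (hab : ∀ a b : H, a * b = b * a) : Nat.card H ≤ 5 := by
  let _ : CommGroup H := { mul_comm := hab }
  by_contra! h5
  have hdvd : Nat.card H ∣ 60 := nat_card_fin_five ▸ H.card_subgroup_dvd_card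
  obtain ⟨p, q, hp, hq, hpq, hpH, hqH⟩ := Nat.exists_primes_dvd_of_dvd_sixty hdvd h5
  obtain ⟨g, hg⟩ := CommGroup.exists_orderOf_eq_mul hp hq hpq hpH hqH
  rcases orderOf_eq_one_or_prime_fin_five (g : alternatingGroup (Fin 5)) with h | h <;>
    rw [Subgroup.orderOf_coe, hg] at h
  · exact hp.ne_one (Nat.eq_one_of_mul_eq_one_right h)
  · exact Nat.not_prime_mul hp.ne_one hq.ne_one h

end alternatingGroup

/-- Every abelian subgroup of the alternating group `A₅` has index strictly
greater than `5`. -/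
theorem stmt_7 (H : Subgroup (alternatingGroup (Fin 5)))
    (hab : ∀ a b : H, a * b = b * a) :
    5 < H.index := by
  have hcard := alternatingGroup.card_le_five_of_commute H hab
  have hmul := H.card_mul_index
  rw [alternatingGroup.nat_card_fin_five] at hmul
  by_contra! hindex
  have := Nat.mul_le_mul hcard hindex
  omega
end

section
/- Every maximal proper subgroup M of the alternating group A₅ has index [A₅ : M] equal to 5, 6, or 10. -/
/-!
A proper subgroup `M` of the simple group `A₅` has trivial normal core, so `A₅` acts faithfully
on the cosets of `M` and `60 ∣ [A₅ : M]!`, which forces `[A₅ : M] ≥ 5`, i.e. `|M| ≤ 12`. Since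
`|M|` divides `60`, it remains to exclude `|M| ≤ 5`. Such an `M` is an abelian `p`-group. If it
is maximal and nontrivial it is self-normalizing, hence a Sylow subgroup central in its
normalizer, and Burnside's transfer theorem gives it a normal complement, which simplicity
rules out. Finally `⊥` is not maximal, since `A₅` is not cyclic.
-/

open Subgroup
open scoped Nat

variable {G : Type*} [Group G]

theorem Subgroup.card_dvd_factorial_index [Finite G] [IsSimpleGroup G] {H : Subgroup G}
    (hH : H ≠ ⊤) : Nat.card G ∣ H.index ! := by
  have hcore : H.normalCore = ⊥ :=
    (IsSimpleGroup.eq_bot_or_eq_top_of_normal _ H.normalCore_normal).resolve_right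
      fun h => hH (top_le_iff.mp (h ▸ H.normalCore_le))
  rw [← index_bot, ← hcore, normalCore_eq_ker, index_ker, index_eq_card, ← Nat.card_perm]
  exact card_subgroup_dvd_card _

theorem isCyclic_of_isCoatom_bot (h : IsCoatom (⊥ : Subgroup G)) : IsCyclic G := by
  have : Nontrivial G :=
    (subsingleton_or_nontrivial G).resolve_left fun _ => h.1 (Subsingleton.elim _ _)
  obtain ⟨g, hg⟩ := exists_ne (1 : G)
  have hg_top : zpowers g = ⊤ := h.2 _ (bot_lt_iff_ne_bot.mpr (zpowers_ne_bot.mpr hg))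
  exact ⟨g, fun x => mem_zpowers_iff.mp (hg_top ▸ mem_top x)⟩

theorem isMulCommutative_of_card_dvd_prime_sq {p : ℕ} [hp : Fact p.Prime]
    (h : Nat.card G ∣ p ^ 2) : IsMulCommutative G := by
  obtain ⟨k, hk, hcard⟩ := (Nat.dvd_prime_pow hp.out).mp h
  interval_cases k
  · have : Subsingleton G := (Nat.card_eq_one_iff_unique.mp (by simpa using hcard)).1
    infer_instance
  · exact (isCyclic_of_prime_card (by simpa using hcard)).isMulCommutative
  · exact IsPGroup.isMulCommutative_of_card_eq_prime_sq hcard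

theorem Subgroup.normalizer_eq_self_of_isCoatom [IsSimpleGroup G] {M : Subgroup G}
    (hM : IsCoatom M) (hM_ne_bot : M ≠ ⊥) : normalizer (M : Set G) = M := by
  refine (hM.le_iff.mp le_normalizer).resolve_left fun h => ?_
  rcases IsSimpleGroup.eq_bot_or_eq_top_of_normal M (normalizer_eq_top_iff.mp h) with h | h
  exacts [hM_ne_bot h, hM.1 h]

theorem Sylow.eq_bot_of_isCoatom [Finite G] [IsSimpleGroup G] {p : ℕ} [Fact p.Prime]
    (P : Sylow p G) [IsMulCommutative P] (hP : IsCoatom (P : Subgroup G)) :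
    (P : Subgroup G) = ⊥ := by
  by_contra hP_ne_bot
  have hN : normalizer ((P : Subgroup G) : Set G) ≤ centralizer ((P : Subgroup G) : Set G) := by
    rw [normalizer_eq_self_of_isCoatom hP hP_ne_bot]
    exact le_centralizer _
  -- Burnside: the kernel of the transfer `G → P` is a normal complement of `P`.
  have hcompl := MonoidHom.ker_transferSylow_isComplement' P hN
  rcases IsSimpleGroup.eq_bot_or_eq_top_of_normal _
      (MonoidHom.normal_ker (MonoidHom.transferSylow P hN)) with h | h
  · exact hP.1 (isComplement'_bot_left.mp (h ▸ hcompl))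
  · exact hP_ne_bot (isComplement'_top_left.mp (h ▸ hcompl))

theorem IsPGroup.eq_bot_of_isCoatom [Finite G] [IsSimpleGroup G] {p : ℕ} [Fact p.Prime]
    {M : Subgroup G} (hpM : IsPGroup p M) [IsMulCommutative M] (hM : IsCoatom M) : M = ⊥ := by
  obtain ⟨P, hMP⟩ := hpM.exists_le_sylow
  rcases hM.le_iff.mp hMP with hP | hP
  · have : Group.IsNilpotent G :=
      (IsPGroup.of_equiv P.isPGroup' (hP ▸ Subgroup.topEquiv)).isNilpotent
    exact (IsSimpleGroup.eq_bot_or_eq_top_of_normal M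
      (Group.normalizerCondition_of_isNilpotent.normal_of_coatom M hM)).resolve_right hM.1
  · subst hP
    exact P.eq_bot_of_isCoatom hM

/-- Every maximal proper subgroup `M` of the alternating group `A₅` has index
`5`, `6`, or `10`. -/
theorem stmt_9 (M : Subgroup (alternatingGroup (Fin 5))) (hM : IsCoatom M) :
    M.index = 5 ∨ M.index = 6 ∨ M.index = 10 := by
  have hcard : Nat.card (alternatingGroup (Fin 5)) = 60 := by
    rw [nat_card_alternatingGroup, Nat.card_fin]; rfl
  have hmul : Nat.card M * M.index = 60 := hcard ▸ M.card_mul_index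
  have hfact : 60 ∣ M.index ! := hcard ▸ M.card_dvd_factorial_index hM.1
  have hM_ne_bot : M ≠ ⊥ := fun h => by
    have := (alternatingGroup.isCyclic_iff_card_le_three (α := Fin 5)).mp
      (isCyclic_of_isCoatom_bot (h ▸ hM))
    simp at this
  have hM_large : ∀ p, p.Prime → ¬ Nat.card M ∣ p ^ 2 := fun p hp hdvd => by
    have := Fact.mk hp
    have := isMulCommutative_of_card_dvd_prime_sq hdvd
    obtain ⟨k, -, hk⟩ := (Nat.dvd_prime_pow hp).mp hdvd
    exact hM_ne_bot ((IsPGroup.of_card hk).eq_bot_of_isCoatom hM)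
  have hindex : 5 ≤ M.index := by
    by_contra! h
    interval_cases M.index <;> revert hfact <;> decide
  have hcardM : 6 ≤ Nat.card M := by
    by_contra! h
    have : 0 < Nat.card M := Nat.card_pos
    interval_cases hc : Nat.card M
    · exact hM_large 2 Nat.prime_two (by norm_num)
    · exact hM_large 2 Nat.prime_two (by norm_num)
    · exact hM_large 3 Nat.prime_three (by norm_num)
    · exact hM_large 2 Nat.prime_two (by norm_num)
    · exact hM_large 5 Nat.prime_five (by norm_num)
  have : M.index ≤ 10 := by nlinarith
  interval_cases M.index <;> omega
end
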